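/- If a fourth-order elasticity tensor C on ℝ³ (with symmetries C_{ijkl} = C_{jikl} = C_{ijlk} = C_{klij}) satisfies the uniform pointwise stability condition (1/2) ε : C : ε ≥ κ ε : ε for all symmetric 3×3 matrices ε and some κ > 0, then its Voigt representation c (a symmetric 6×6 matrix) satisfies det(c) ≥ κ^6 / 8. -/
import Mathlib
set_option maxHeartbeats 2000000


open Matrix in
lemma quad_det {n : ℕ} (M : Matrix (Fin n) (Fin n) ℝ) (hM : M.IsHermitian) (κ : ℝ) (hκ : 0 ≤ κ)
    (h : ∀ v : Fin n → ℝ, κ * (∑ i, v i ^ 2) ≤ dotProduct v (M.mulVec v)) :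
    κ ^ n ≤ M.det := by
  rw [hM.det_eq_prod_eigenvalues]
  calc κ ^ n = ∏ _i : Fin n, κ := by simp
  _ ≤ ∏ i, hM.eigenvalues i := by
      apply Finset.prod_le_prod (fun _ _ => hκ)
      intro i _
      have hu := hM.eigenvalues_eq i
      set u : Fin n → ℝ := ⇑(hM.eigenvectorBasis i) with hudef
      have hnorm : ∑ j, u j ^ 2 = 1 := by
        have h1 := hM.eigenvectorBasis.orthonormal.1 i
        have h2 : ‖hM.eigenvectorBasis i‖ ^ 2 = ∑ j, u j ^ 2 := by
          rw [EuclideanSpace.norm_eq, Real.sq_sqrt (by positivity)]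
          simp [hudef, Real.norm_eq_abs, sq_abs]
        rw [← h2, h1, one_pow]
      have hq := h u
      rw [hnorm, mul_one] at hq
      rw [hu]
      simpa using hq


/-- The Voigt double-index map: 1↦11, 2↦22, 3↦33, 4↦23, 5↦13, 6↦12 (0-indexed). -/
def voigtIdx : Fin 6 → Fin 3 × Fin 3 := ![(0,0), (1,1), (2,2), (1,2), (0,2), (0,1)]

/-- If an elasticity tensor `C` (with the usual symmetries) is uniformly pointwise
stable with constant `κ > 0`, then its Voigt representation `c` satisfies
`det c ≥ κ^6 / 8`. -/
theorem stmt_2 (C : Fin 3 → Fin 3 → Fin 3 → Fin 3 → ℝ)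
    (hsym1 : ∀ i j k l, C i j k l = C j i k l)
    (hsym2 : ∀ i j k l, C i j k l = C i j l k)
    (hsym3 : ∀ i j k l, C i j k l = C k l i j)
    (κ : ℝ) (hκ : 0 < κ)
    (hstab : ∀ ε : Fin 3 → Fin 3 → ℝ, (∀ i j, ε i j = ε j i) →
      κ * (∑ i, ∑ j, (ε i j) ^ 2) ≤
        (1 / 2) * ∑ i, ∑ j, ∑ k, ∑ l, ε i j * C i j k l * ε k l) :
    κ ^ 6 / 8 ≤ Matrix.det (Matrix.of fun α β =>
      C (voigtIdx α).1 (voigtIdx α).2 (voigtIdx β).1 (voigtIdx β).2) := by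
  set M : Matrix (Fin 6) (Fin 6) ℝ := Matrix.of fun α β =>
      C (voigtIdx α).1 (voigtIdx α).2 (voigtIdx β).1 (voigtIdx β).2 with hM
  have hherm : M.IsHermitian := by
    ext α β
    simp only [hM, Matrix.conjTranspose_apply, Matrix.of_apply, RCLike.star_def, starRingEnd_apply,
      star_trivial]
    exact (hsym3 _ _ _ _).symm
  have hquad : ∀ v : Fin 6 → ℝ, κ * (∑ i, v i ^ 2) ≤ dotProduct v (M.mulVec v) := by
    intro v
    set ε : Fin 3 → Fin 3 → ℝ :=
      ![![v 0, v 5 / 2, v 4 / 2], ![v 5 / 2, v 1, v 3 / 2], ![v 4 / 2, v 3 / 2, v 2]] with hε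
    have hεsym : ∀ i j, ε i j = ε j i := by
      intro i j; fin_cases i <;> fin_cases j <;> simp [hε]
    have hq := hstab ε hεsym
    have e1 : ∀ k l, C 1 0 k l = C 0 1 k l := fun k l => (hsym1 0 1 k l).symm
    have e2 : ∀ k l, C 2 0 k l = C 0 2 k l := fun k l => (hsym1 0 2 k l).symm
    have e3 : ∀ k l, C 2 1 k l = C 1 2 k l := fun k l => (hsym1 1 2 k l).symm
    have f1 : ∀ i j, C i j 1 0 = C i j 0 1 := fun i j => (hsym2 i j 0 1).symm
    have f2 : ∀ i j, C i j 2 0 = C i j 0 2 := fun i j => (hsym2 i j 0 2).symm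
    have f3 : ∀ i j, C i j 2 1 = C i j 1 2 := fun i j => (hsym2 i j 1 2).symm
    simp only [Fin.sum_univ_three, hε, Matrix.cons_val_zero,
      Matrix.cons_val_one, Matrix.head_cons, Matrix.cons_val_two, Matrix.tail_cons,
      e1, e2, e3, f1, f2, f3] at hq
    have V01 : (voigtIdx 0).1 = 0 := rfl
    have V02 : (voigtIdx 0).2 = 0 := rfl
    have V11 : (voigtIdx 1).1 = 1 := rfl
    have V12 : (voigtIdx 1).2 = 1 := rfl
    have V21 : (voigtIdx 2).1 = 2 := rfl
    have V22 : (voigtIdx 2).2 = 2 := rfl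
    have V31 : (voigtIdx 3).1 = 1 := rfl
    have V32 : (voigtIdx 3).2 = 2 := rfl
    have V41 : (voigtIdx 4).1 = 0 := rfl
    have V42 : (voigtIdx 4).2 = 2 := rfl
    have V51 : (voigtIdx 5).1 = 0 := rfl
    have V52 : (voigtIdx 5).2 = 1 := rfl
    simp only [hM, dotProduct, Matrix.mulVec, Fin.sum_univ_six, Matrix.of_apply,
      V01, V02, V11, V12, V21, V22, V31, V32, V41, V42, V51, V52]
    linarith [hq, mul_nonneg hκ.le (sq_nonneg (v 0)), mul_nonneg hκ.le (sq_nonneg (v 1)),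
      mul_nonneg hκ.le (sq_nonneg (v 2))]
  have := quad_det M hherm κ hκ.le hquad
  have h8 : κ ^ 6 / 8 ≤ κ ^ 6 := by
    have : 0 ≤ κ ^ 6 := by positivity
    linarith
  calc κ ^ 6 / 8 ≤ κ ^ 6 := h8
  _ ≤ M.det := this
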